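/- Let W̃ be a group with an abelian normal subgroup X such that the quotient W̃/X is finite, and let σ be an automorphism of W̃ of finite order with σ(X) = X. Then: (a) for every w ∈ W̃ there exists an integer n ≥ 1 such that σⁿ is the identity automorphism of W̃ and g_n(w) = w · σ(w) ⋯ σ^{n−1}(w) lies in X; (b) the resulting element is well defined up to scaling: if n, m ≥ 1 both satisfy σⁿ = id, g_n(w) = λ ∈ X and σᵐ = id, g_m(w) = μ ∈ X, then λᵐ = μⁿ in X. (This is the well-definedness of the Newton point (1/n)·λ attached to an element of the Iwahori–Weyl group W̃ = X_*(T)_{Γ₀} ⋊ W₀ with its Frobenius action σ.) -/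

import Mathlib

/-!
If `σ ^ k = 1` then `g_{k m}(w) = g_k(w) ^ m`, because the factors of `g_{k m}(w)` repeat
with period `k`. Part (a) follows by taking `k` the order of `σ` and `m` such that
`g_k(w) ^ m` lies in the finite-index subgroup `X`; part (b) because
`g_n(w) ^ m` and `g_m(w) ^ n` are both equal to `g_{n m}(w)`.
-/

/-- For an automorphism `σ` of a group `W` and `w ∈ W`, the twisted product
`g_n(w) = w · σ(w) · σ²(w) ⋯ σ^{n−1}(w)`. -/
def twistProd {W : Type*} [Group W] (σ : W → W) (w : W) (n : ℕ) : W :=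
  ((List.range n).map fun i => σ^[i] w).prod

lemma MulAut.coe_pow_eq_iterate {W : Type*} [Group W] (σ : MulAut W) (n : ℕ) :
    ⇑(σ ^ n) = (⇑σ)^[n] := by
  induction n with
  | zero => rfl
  | succ k ih => rw [pow_succ', Function.iterate_succ', ← ih]; rfl

section twistProd

variable {W : Type*} [Group W] (σ : MulAut W) (w : W)

lemma twistProd_add (a b : ℕ) :
    twistProd σ w (a + b) = twistProd σ w a * (σ ^ a) (twistProd σ w b) := by
  simp only [twistProd, List.range_add, List.map_append, List.prod_append, List.map_map,
    map_list_prod, Function.comp_def, MulAut.coe_pow_eq_iterate, ← Function.iterate_add_apply]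

lemma twistProd_mul_of_pow_eq_one {k : ℕ} (hk : σ ^ k = 1) (m : ℕ) :
    twistProd σ w (k * m) = twistProd σ w k ^ m := by
  induction m with
  | zero => simp [twistProd]
  | succ j ih =>
    rw [Nat.mul_succ, twistProd_add, ih, pow_mul, hk, one_pow, pow_succ]
    rfl

lemma twistProd_pow_comm_of_pow_eq_one {n m : ℕ} (hn : σ ^ n = 1) (hm : σ ^ m = 1) :
    twistProd σ w n ^ m = twistProd σ w m ^ n := by
  rw [← twistProd_mul_of_pow_eq_one σ w hn, ← twistProd_mul_of_pow_eq_one σ w hm, mul_comm]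

lemma exists_twistProd_mem_of_isOfFinOrder (H : Subgroup W) [Finite (W ⧸ H)]
    (hσ : IsOfFinOrder σ) : ∃ n, 1 ≤ n ∧ σ ^ n = 1 ∧ twistProd σ w n ∈ H := by
  obtain ⟨m, hm, -, hmem⟩ :=
    H.exists_pow_mem_of_index_ne_zero H.index_ne_zero_of_finite (twistProd σ w (orderOf σ))
  refine ⟨orderOf σ * m, Nat.mul_pos hσ.orderOf_pos hm, ?_, ?_⟩
  · rw [pow_mul, pow_orderOf_eq_one, one_pow]
  · rwa [twistProd_mul_of_pow_eq_one σ w (pow_orderOf_eq_one σ)]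

end twistProd

theorem newton_point_well_defined_general {Wt : Type*} [Group Wt]
    (X : Subgroup Wt) [Finite (Wt ⧸ X)]
    (σ : MulAut Wt) (hσ : IsOfFinOrder σ) :
    (∀ w : Wt, ∃ n : ℕ, 1 ≤ n ∧ σ ^ n = 1 ∧ twistProd σ w n ∈ X) ∧
    (∀ w : Wt, ∀ n m : ℕ, 1 ≤ n → 1 ≤ m → σ ^ n = 1 → σ ^ m = 1 →
      twistProd σ w n ∈ X → twistProd σ w m ∈ X →
      (twistProd σ w n) ^ m = (twistProd σ w m) ^ n) :=
  ⟨fun w => exists_twistProd_mem_of_isOfFinOrder σ w X hσ,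
    fun w _ _ _ _ hn hm _ _ => twistProd_pow_comm_of_pow_eq_one σ w hn hm⟩

/-- Let `W̃` be a group with an abelian normal subgroup `X` of finite index, and
`σ` a finite-order automorphism of `W̃` with `σ(X) = X`. Then (a) for every `w`
there is `n ≥ 1` with `σⁿ = id` and `g_n(w) ∈ X`; (b) if `n, m ≥ 1` both satisfy
`σⁿ = id`, `g_n(w) ∈ X` and `σᵐ = id`, `g_m(w) ∈ X`, then `g_n(w)^m = g_m(w)^n`. -/
theorem newton_point_well_defined {Wt : Type*} [Group Wt]
    (X : Subgroup Wt) [X.Normal] [IsMulCommutative X] [Finite (Wt ⧸ X)]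
    (σ : MulAut Wt) (hσ : IsOfFinOrder σ)
    (hσX : ∀ g : Wt, g ∈ X ↔ σ g ∈ X) :
    (∀ w : Wt, ∃ n : ℕ, 1 ≤ n ∧ σ ^ n = 1 ∧ twistProd σ w n ∈ X) ∧
    (∀ w : Wt, ∀ n m : ℕ, 1 ≤ n → 1 ≤ m → σ ^ n = 1 → σ ^ m = 1 →
      twistProd σ w n ∈ X → twistProd σ w m ∈ X →
      (twistProd σ w n) ^ m = (twistProd σ w m) ^ n) :=
  newton_point_well_defined_general X σ hσ
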